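/- Let H = (M, n, R) be a constant-rate multi-mode system, S ⊆ ℝⁿ an open set, and x, y ∈ ℝⁿ such that the closed line segment {λ·x + (1−λ)·y : λ ∈ [0,1]} is contained in S and y − x = Σ_{m ∈ M} t(m) · R(m) for some t : M → ℝ with t(m) ≥ 0 for all m ∈ M. Then there exists an S-safe finite schedule steering H from x to y. -/

import Mathlib

/-!
Cover the segment by a closed `δ`-neighbourhood inside `S` (compactness) and split the
displacement `y - x = ∑ t m • R m` into `N` equal rounds, each running every mode `m` for
time `t m / N`. A round travels a path of length at most `C / N ≤ δ`, where `C = ∑ t m ‖R m‖`,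
and the `k`-th round starts at the point `x + (k / N) • (y - x)` of the segment, so it stays
in the closed `δ`-ball around that point and hence in `S`.
-/

/-- The terminal state of the run of a schedule (a list of timed actions) from a state. -/
def runEnd {M V : Type*} [AddCommGroup V] [Module ℝ V] (R : M → V) : V → List (M × ℝ) → V
  | x, [] => x
  | x, (m, t) :: σ => runEnd R (x + t • R m) σ

/-- A schedule is `S`-safe from `x` if every point visited during its run
(including along each timed action) lies in `S`. -/
def SafeSched {M V : Type*} [AddCommGroup V] [Module ℝ V] (R : M → V) (S : Set V) :
    V → List (M × ℝ) → Prop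
  | _, [] => True
  | x, (m, t) :: σ =>
      (∀ τ ∈ Set.Icc (0 : ℝ) t, x + τ • R m ∈ S) ∧ SafeSched R S (x + t • R m) σ

open Metric

section Schedule

variable {M V : Type*} [AddCommGroup V] [Module ℝ V] (R : M → V) {S : Set V}

def drift (σ : List (M × ℝ)) : V :=
  (σ.map fun p => p.2 • R p.1).sum

theorem runEnd_eq_add_drift (σ : List (M × ℝ)) (x : V) : runEnd R x σ = x + drift R σ := by
  induction σ generalizing x with
  | nil => simp [runEnd, drift]
  | cons p σ ih => simp [runEnd, drift, ih, add_assoc]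

theorem drift_flatten_replicate (k : ℕ) (σ : List (M × ℝ)) :
    drift R (List.replicate k σ).flatten = (k : ℝ) • drift R σ := by
  simp [drift, List.map_flatten, List.sum_flatten, List.sum_replicate, Nat.cast_smul_eq_nsmul]

variable {R}

theorem safeSched_append {σ σ' : List (M × ℝ)} {x : V} :
    SafeSched R S x (σ ++ σ') ↔ SafeSched R S x σ ∧ SafeSched R S (runEnd R x σ) σ' := by
  induction σ generalizing x with
  | nil => simp [SafeSched, runEnd]
  | cons p σ ih => simp [SafeSched, runEnd, ih, and_assoc]

theorem safeSched_flatten_replicate {σ : List (M × ℝ)} {x : V} {k : ℕ}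
    (hsafe : ∀ j < k, SafeSched R S (x + (j : ℝ) • drift R σ) σ) :
    SafeSched R S x (List.replicate k σ).flatten := by
  induction k generalizing x with
  | zero => trivial
  | succ k ih =>
    rw [List.replicate_succ, List.flatten_cons, safeSched_append, runEnd_eq_add_drift]
    refine ⟨by simpa using hsafe 0 k.succ_pos, ih fun j hj => ?_⟩
    simpa [add_assoc, add_smul, add_comm] using hsafe (j + 1) (by omega)

end Schedule

theorem safeSched_of_dist_add_sum_le {M V : Type*} [NormedAddCommGroup V] [NormedSpace ℝ V]
    {R : M → V} {S : Set V} {z₀ : V} {r : ℝ} (hball : closedBall z₀ r ⊆ S) :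
    ∀ {σ : List (M × ℝ)} {z : V}, (∀ p ∈ σ, 0 ≤ p.2) →
      dist z z₀ + (σ.map fun p => p.2 * ‖R p.1‖).sum ≤ r → SafeSched R S z σ
  | [], _, _, _ => trivial
  | (m, t) :: σ, z, hσ, hlen => by
    simp only [List.mem_cons, forall_eq_or_imp] at hσ
    simp only [List.map_cons, List.sum_cons] at hlen
    have hrest : 0 ≤ (σ.map fun p => p.2 * ‖R p.1‖).sum :=
      List.sum_nonneg fun a ha => by
        obtain ⟨p, hp, rfl⟩ := List.mem_map.mp ha
        exact mul_nonneg (hσ.2 p hp) (norm_nonneg _)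
    have hstep : ∀ τ, 0 ≤ τ → dist (z + τ • R m) z₀ ≤ dist z z₀ + τ * ‖R m‖ := fun τ hτ =>
      calc dist (z + τ • R m) z₀ ≤ dist (z + τ • R m) z + dist z z₀ := dist_triangle _ _ _
        _ = dist z z₀ + τ * ‖R m‖ := by
          rw [dist_eq_norm, add_sub_cancel_left, norm_smul, Real.norm_of_nonneg hτ, add_comm]
    refine ⟨fun τ hτ => hball (mem_closedBall.mpr ?_), safeSched_of_dist_add_sum_le hball hσ.2 ?_⟩
    · have := mul_le_mul_of_nonneg_right hτ.2 (norm_nonneg (R m))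
      linarith [hstep τ hτ.1]
    · linarith [hstep t hσ.1]

section RoundRobin

variable {M : Type*} [Fintype M]

noncomputable def roundRobin (s : M → ℝ) : List (M × ℝ) :=
  Finset.univ.toList.map fun m => (m, s m)

theorem sum_map_roundRobin {A : Type*} [AddCommMonoid A] (s : M → ℝ) (f : M × ℝ → A) :
    ((roundRobin s).map f).sum = ∑ m, f (m, s m) := by
  rw [roundRobin, List.map_map, Finset.sum_map_toList]
  rfl

end RoundRobin

theorem exists_nat_pos_div_le {C δ : ℝ} (hC : 0 ≤ C) (hδ : 0 < δ) :
    ∃ N : ℕ, 0 < (N : ℝ) ∧ C / N ≤ δ := by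
  obtain ⟨N, hN⟩ := exists_nat_gt (C / δ)
  have hNpos : 0 < (N : ℝ) := (div_nonneg hC hδ.le).trans_lt hN
  refine ⟨N, hNpos, (div_le_iff₀ hNpos).mpr ?_⟩
  rw [div_lt_iff₀ hδ] at hN
  linarith

theorem add_div_smul_sub_mem_segment {V : Type*} [AddCommGroup V] [Module ℝ V] (x y : V)
    {j N : ℝ} (hj : 0 ≤ j) (hjN : j ≤ N) :
    x + (j / N) • (y - x) ∈ segment ℝ x y := by
  rw [segment_eq_image']
  exact ⟨j / N, ⟨div_nonneg hj (hj.trans hjN), div_le_one_of_le₀ hjN (hj.trans hjN)⟩, rfl⟩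

theorem stmt2_general {M : Type*} [Fintype M] {n : ℕ}
    (R : M → (Fin n → ℝ)) (S : Set (Fin n → ℝ)) (hSopen : IsOpen S)
    (x y : Fin n → ℝ) (hseg : segment ℝ x y ⊆ S)
    (t : M → ℝ) (ht : ∀ m, 0 ≤ t m) (hsum : y - x = ∑ m, t m • R m) :
    ∃ σ : List (M × ℝ), (∀ p ∈ σ, 0 ≤ p.2) ∧ SafeSched R S x σ ∧ runEnd R x σ = y := by
  have hcompact : IsCompact (segment ℝ x y) := by
    rw [segment_eq_image_lineMap]
    exact isCompact_Icc.image AffineMap.lineMap_continuous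
  obtain ⟨δ, hδ, hthick⟩ := hcompact.exists_cthickening_subset_open hSopen hseg
  obtain ⟨N, hN, hlen⟩ := exists_nat_pos_div_le
    (Finset.sum_nonneg fun m _ => mul_nonneg (ht m) (norm_nonneg (R m))) hδ
  set round := roundRobin fun m => t m / N
  have hround_nonneg : ∀ p ∈ round, 0 ≤ p.2 := by
    simp only [round, roundRobin, List.mem_map]
    rintro _ ⟨m, -, rfl⟩
    exact div_nonneg (ht m) hN.le
  have hdrift : drift R round = (N : ℝ)⁻¹ • (y - x) := by
    simp only [drift, round, sum_map_roundRobin, hsum, Finset.smul_sum, smul_smul, div_eq_inv_mul]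
  refine ⟨(List.replicate N round).flatten, ?_, safeSched_flatten_replicate fun j hj => ?_, ?_⟩
  · simp only [List.mem_flatten, List.mem_replicate]
    rintro p ⟨_, ⟨-, rfl⟩, hp⟩
    exact hround_nonneg p hp
  · have hstart := add_div_smul_sub_mem_segment x y j.cast_nonneg (Nat.cast_le.mpr hj.le)
    refine safeSched_of_dist_add_sum_le
      ((closedBall_subset_cthickening hstart δ).trans hthick) hround_nonneg ?_
    rw [hdrift, smul_smul, ← div_eq_mul_inv, dist_self, zero_add, sum_map_roundRobin]
    simpa only [div_mul_eq_mul_div, Finset.sum_div] using hlen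
  · rw [runEnd_eq_add_drift, drift_flatten_replicate, hdrift, smul_smul,
      mul_inv_cancel₀ hN.ne', one_smul, add_sub_cancel]

/-- If `S` is open, the closed segment from `x` to `y` lies in `S`, and `y - x` is a
nonnegative combination of the rate vectors, then there is an `S`-safe finite schedule
steering the multi-mode system from `x` to `y`. -/
theorem stmt2 {M : Type*} [Fintype M] [Nonempty M] {n : ℕ} (hn : 0 < n)
    (R : M → (Fin n → ℝ)) (S : Set (Fin n → ℝ)) (hSopen : IsOpen S)
    (x y : Fin n → ℝ) (hseg : segment ℝ x y ⊆ S)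
    (t : M → ℝ) (ht : ∀ m, 0 ≤ t m) (hsum : y - x = ∑ m, t m • R m) :
    ∃ σ : List (M × ℝ), (∀ p ∈ σ, 0 ≤ p.2) ∧ SafeSched R S x σ ∧ runEnd R x σ = y :=
  stmt2_general R S hSopen x y hseg t ht hsum
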